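/- arXiv:1703.01731 — 4 statements merged into one kernel-verified Lean document; each statement's English description precedes it below -/
import Mathlib

section
/- Let G be a group and A an abelian subgroup of G of finite index. Let g ∈ G, let ℓ be an integer with 1 ≤ ℓ ≤ (G : A) such that g^ℓ ∈ A, and let q be a positive integer coprime to ℓ. Then for every integer k ≥ 0 and every element c of the centralizer C_G(g^{q+kℓ}), there exists an integer m with 1 ≤ m ≤ (G : A) such that c^m lies in the centralizer C_G(g). -/
/-! Some power `c ^ m` with `1 ≤ m ≤ (G : A)` lies in `A`, so it commutes with `g ^ ℓ ∈ A`; it also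
commutes with `g ^ (q + k ℓ)`. Since `q + k ℓ` and `ℓ` are coprime, a Bézout combination of these two
powers of `g` is `g` itself. -/

theorem Commute.of_pow_of_pow_of_coprime {G : Type*} [Group G] {x g : G} {m n : ℕ}
    (hmn : m.Coprime n) (hm : Commute x (g ^ m)) (hn : Commute x (g ^ n)) : Commute x g := by
  have h := (hm.zpow_right (m.gcdA n)).mul_right (hn.zpow_right (m.gcdB n))
  rwa [← zpow_natCast, ← zpow_natCast, ← zpow_mul, ← zpow_mul, ← zpow_add, ← Nat.gcd_eq_gcd_ab,
    hmn, Nat.cast_one, zpow_one] at h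

theorem stmt0_general {G : Type*} [Group G] (A : Subgroup G)
    (hA : ∀ a b : A, a * b = b * a) (hfin : A.FiniteIndex)
    (g : G) (ℓ q : ℕ) (hgℓ : g ^ ℓ ∈ A) (hcop : Nat.Coprime q ℓ) :
    ∀ k : ℕ, ∀ c ∈ Subgroup.centralizer {g ^ (q + k * ℓ)},
      ∃ m : ℕ, 1 ≤ m ∧ m ≤ A.index ∧ c ^ m ∈ Subgroup.centralizer {g} := by
  intro k c hc
  obtain ⟨m, hm_pos, hm_le, hmA⟩ := A.exists_pow_mem_of_index_ne_zero hfin.index_ne_zero c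
  refine ⟨m, hm_pos, hm_le, Subgroup.mem_centralizer_singleton_iff.mpr ?_⟩
  have hcomm_ℓ : Commute (c ^ m) (g ^ ℓ) := congrArg Subtype.val (hA ⟨_, hmA⟩ ⟨_, hgℓ⟩)
  have hcomm_N : Commute (c ^ m) (g ^ (q + k * ℓ)) :=
    Commute.pow_left (Subgroup.mem_centralizer_singleton_iff.mp hc) m
  exact (Commute.of_pow_of_pow_of_coprime
    ((Nat.coprime_add_mul_right_left q ℓ k).mpr hcop) hcomm_N hcomm_ℓ).eq

/-- Let `G` be a group and `A` an abelian subgroup of `G` of finite index.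
Let `g ∈ G`, let `ℓ` be an integer with `1 ≤ ℓ ≤ (G : A)` such that `g ^ ℓ ∈ A`,
and let `q` be a positive integer coprime to `ℓ`.  Then for every integer `k ≥ 0`
and every element `c` of the centralizer of `g ^ (q + k * ℓ)`, there exists `m`
with `1 ≤ m ≤ (G : A)` such that `c ^ m` lies in the centralizer of `g`. -/
theorem stmt0 {G : Type*} [Group G] (A : Subgroup G)
    (hA : ∀ a b : A, a * b = b * a) (hfin : A.FiniteIndex)
    (g : G) (ℓ q : ℕ)
    (hℓ1 : 1 ≤ ℓ) (hℓ2 : ℓ ≤ A.index) (hgℓ : g ^ ℓ ∈ A)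
    (hq : 0 < q) (hcop : Nat.Coprime q ℓ) :
    ∀ k : ℕ, ∀ c ∈ Subgroup.centralizer {g ^ (q + k * ℓ)},
      ∃ m : ℕ, 1 ≤ m ∧ m ≤ A.index ∧ c ^ m ∈ Subgroup.centralizer {g} :=
  stmt0_general A hA hfin g ℓ q hgℓ hcop
end

section
/- Let G be an R-group, g ∈ G, and n a positive integer. If c lies in the centralizer C_G(g^n), then c lies in the centralizer C_G(g); consequently C_G(g^n) = C_G(g). -/
theorem Commute.of_pow_right_of_injective_pow {G : Type*} [Group G] {n : ℕ}
    (hinj : Function.Injective fun x : G ↦ x ^ n) {c g : G} (h : Commute c (g ^ n)) :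
    Commute c g := by
  have hconj : (c * g * c⁻¹) ^ n = g ^ n := by
    rw [conj_pow, h.eq, mul_inv_cancel_right]
  exact mul_inv_eq_iff_eq_mul.mp (hinj hconj)

theorem Subgroup.centralizer_singleton_pow_of_injective_pow {G : Type*} [Group G] {n : ℕ}
    (hinj : Function.Injective fun x : G ↦ x ^ n) (g : G) :
    Subgroup.centralizer {g ^ n} = Subgroup.centralizer {g} := by
  ext c
  simp only [Subgroup.mem_centralizer_singleton_iff]
  exact ⟨Commute.of_pow_right_of_injective_pow hinj, (Commute.pow_right · n)⟩

/-- Let `G` be an R-group (i.e. `g ^ n = h ^ n` with `n ≥ 1` implies `g = h`),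
`g ∈ G`, and `n` a positive integer.  If `c` lies in the centralizer of `g ^ n`,
then `c` lies in the centralizer of `g`; consequently the two centralizers agree. -/
theorem stmt2 {G : Type*} [Group G]
    (hR : ∀ (g h : G) (n : ℕ), 1 ≤ n → g ^ n = h ^ n → g = h)
    (g : G) (n : ℕ) (hn : 0 < n) :
    (∀ c ∈ Subgroup.centralizer {g ^ n}, c ∈ Subgroup.centralizer {g}) ∧
      Subgroup.centralizer {g ^ n} = Subgroup.centralizer ({g} : Set G) := by
  have hcent := Subgroup.centralizer_singleton_pow_of_injective_pow
    (fun x y hxy ↦ hR x y n hn hxy) g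
  exact ⟨hcent.le, hcent⟩
end

section
/- Let G be an R-group, g, h ∈ G, and n a positive integer. If g^n is conjugate to h^n in G, then g is conjugate to h in G. In particular, the conjugacy class of g^n has a unique n-th root, namely the conjugacy class of g. -/
theorem IsConj.of_pow_of_injective {G : Type*} [Group G] {n : ℕ}
    (hinj : Function.Injective (· ^ n : G → G)) {g h : G} (hc : IsConj (g ^ n) (h ^ n)) :
    IsConj g h := by
  obtain ⟨c, hc⟩ := isConj_iff.mp hc
  exact isConj_iff.mpr ⟨c, hinj (by simp only [conj_pow, hc])⟩

/-- Let `G` be an R-group, `g h ∈ G`, and `n` a positive integer.  If `g ^ n` is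
conjugate to `h ^ n` in `G`, then `g` is conjugate to `h`.  In particular, the
conjugacy class of `g ^ n` has a unique `n`-th root, namely the conjugacy class
of `g`. -/
theorem stmt3 {G : Type*} [Group G]
    (hR : ∀ (g h : G) (n : ℕ), 1 ≤ n → g ^ n = h ^ n → g = h)
    (g h : G) (n : ℕ) (hn : 0 < n) :
    (IsConj (g ^ n) (h ^ n) → IsConj g h) ∧
      (∀ h₁ h₂ : G, IsConj (h₁ ^ n) (g ^ n) → IsConj (h₂ ^ n) (g ^ n) →
        IsConj h₁ h₂) := by
  have hinj : Function.Injective (· ^ n : G → G) := fun a b hab => hR a b n hn hab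
  exact ⟨IsConj.of_pow_of_injective hinj,
    fun h₁ h₂ hc₁ hc₂ => IsConj.of_pow_of_injective hinj (hc₁.trans hc₂.symm)⟩
end

section
/- Every torsion-free nilpotent group is an R-group: if G is a nilpotent group in which every nontrivial element has infinite order, then for all g, h ∈ G and every natural number n ≥ 1, the equality g^n = h^n implies g = h. -/
/-- Final step: commuting elements with equal `n`-th powers are equal in a
torsion-free group. -/
lemma aux_commute_eq {G : Type*} [Group G]
    (htf : ∀ g : G, ∀ m : ℕ, 1 ≤ m → g ^ m = 1 → g = 1)
    {x y : G} {n : ℕ} (hn : 1 ≤ n) (hxy : Commute x y) (h : x ^ n = y ^ n) : x = y := by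
  have hc : Commute x y⁻¹ := hxy.inv_right
  have h1 : (x * y⁻¹) ^ n = 1 := by
    rw [hc.mul_pow, inv_pow, h, mul_inv_cancel]
  exact mul_inv_eq_one.mp (htf _ n hn h1)

open scoped commutatorElement in
/-- Main induction on the length of the lower central series (Mal'cev). -/
lemma aux_key : ∀ (c : ℕ) {G : Type*} [Group G], Subgroup.lowerCentralSeries (⊤ : Subgroup G) c = ⊥ →
    (∀ g : G, ∀ m : ℕ, 1 ≤ m → g ^ m = 1 → g = 1) →
    ∀ x y : G, ∀ n : ℕ, 1 ≤ n → x ^ n = y ^ n → x = y := by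
  intro c
  induction c with
  | zero =>
    intro G _ hbot _ x y n _ _
    have hx : x ∈ (⊥ : Subgroup G) := by rw [← hbot]; trivial
    have hy : y ∈ (⊥ : Subgroup G) := by rw [← hbot]; trivial
    rw [Subgroup.mem_bot] at hx hy
    rw [hx, hy]
  | succ c ih =>
    intro G _ hbot htf x y n hn hxy
    rcases Nat.eq_zero_or_pos c with hc0 | hc1
    · -- abelian case
      subst hc0
      have hcomm : Commute x y := by
        have h2 : ⁅x, y⁆ ∈ Subgroup.lowerCentralSeries (⊤ : Subgroup G) 1 := by
          rw [lowerCentralSeries_one]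
          exact Subgroup.commutator_mem_commutator (Subgroup.mem_top x) (Subgroup.mem_top y)
        rw [hbot, Subgroup.mem_bot] at h2
        exact commutatorElement_eq_one_iff_commute.mp h2
      exact aux_commute_eq htf hn hcomm hxy
    · -- c ≥ 1
      set Γ : Subgroup G := Subgroup.lowerCentralSeries (⊤ : Subgroup G) 1 with hΓ
      set K : Subgroup G := Subgroup.zpowers x ⊔ Γ with hKdef
      set N : Subgroup G := Subgroup.lowerCentralSeries (⊤ : Subgroup G) 2 with hN
      -- Step 1: ⁅K, K⁆ ≤ N
      have hKK : ⁅K, K⁆ ≤ N := by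
        have hcent : ∀ g ∈ Γ, ∀ b : G, Commute ((g : G) : G ⧸ N) ((b : G) : G ⧸ N) := by
          intro g hg b
          have h3 : ⁅g, b⁆ ∈ N := by
            show ⁅g, b⁆ ∈ ⁅Subgroup.lowerCentralSeries (⊤ : Subgroup G) 1, ⊤⁆
            exact Subgroup.commutator_mem_commutator hg (Subgroup.mem_top b)
          have h1 : ((⁅g, b⁆ : G) : G ⧸ N) = 1 := (QuotientGroup.eq_one_iff _).mpr h3
          rw [show ((⁅g, b⁆ : G) : G ⧸ N) = ⁅((g : G) : G ⧸ N), ((b : G) : G ⧸ N)⁆ from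
            map_commutatorElement (QuotientGroup.mk' N) g b] at h1
          exact commutatorElement_eq_one_iff_commute.mp h1
        have hgen : K = Subgroup.closure ({x} ∪ (Γ : Set G)) := by
          rw [Subgroup.closure_union, Subgroup.closure_eq, ← Subgroup.zpowers_eq_closure, hKdef]
        -- any two elements of K commute modulo N
        have hcomm : ∀ g ∈ K, ∀ h ∈ K, Commute ((g : G) : G ⧸ N) ((h : G) : G ⧸ N) := by
          intro g hg h hh
          rw [hgen] at hg hh
          induction hg using Subgroup.closure_induction with
          | mem a ha =>
            rcases ha with ha | ha
            · -- a = x : induct on h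
              rw [Set.mem_singleton_iff] at ha
              subst ha
              induction hh using Subgroup.closure_induction with
              | mem b hb =>
                rcases hb with hb | hb
                · rw [Set.mem_singleton_iff] at hb; subst hb; exact Commute.refl _
                · exact ((hcent b hb a).symm)
              | one => exact Commute.one_right _
              | mul b c _ _ hb hc => exact (hb.mul_right hc)
              | inv b _ hb => exact hb.inv_right
            · exact hcent a ha h
          | one => exact Commute.one_left _
          | mul a b _ _ ha hb => exact ha.mul_left hb
          | inv a _ ha => exact ha.inv_left
        rw [Subgroup.commutator_le]
        intro g hg h hh
        rw [← QuotientGroup.eq_one_iff,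
          show ((⁅g, h⁆ : G) : G ⧸ N) = ⁅((g : G) : G ⧸ N), ((h : G) : G ⧸ N)⁆ from
            map_commutatorElement (QuotientGroup.mk' N) g h]
        exact commutatorElement_eq_one_iff_commute.mpr (hcomm g hg h hh)
      -- Step 2: the lower central series of K is shifted by one
      have hmap : ∀ i : ℕ, 1 ≤ i →
          (Subgroup.lowerCentralSeries (⊤ : Subgroup ↥K) i).map K.subtype ≤ Subgroup.lowerCentralSeries (⊤ : Subgroup G) (i + 1) := by
        intro i
        induction i with
        | zero => intro h; omega
        | succ i ihh =>
          intro _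
          rcases Nat.eq_zero_or_pos i with hi0 | hi1
          · subst hi0
            show Subgroup.map K.subtype ⁅(⊤ : Subgroup ↥K), ⊤⁆ ≤ Subgroup.lowerCentralSeries (⊤ : Subgroup G) 2
            rw [Subgroup.map_commutator, ← MonoidHom.range_eq_map, Subgroup.range_subtype]
            exact hKK
          · calc Subgroup.map K.subtype ⁅Subgroup.lowerCentralSeries (⊤ : Subgroup ↥K) i, ⊤⁆
                = ⁅Subgroup.map K.subtype (Subgroup.lowerCentralSeries (⊤ : Subgroup ↥K) i),
                    Subgroup.map K.subtype ⊤⁆ := Subgroup.map_commutator _ _ _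
              _ ≤ ⁅Subgroup.lowerCentralSeries (⊤ : Subgroup G) (i + 1), ⊤⁆ :=
                  Subgroup.commutator_mono (ihh hi1) le_top
              _ = Subgroup.lowerCentralSeries (⊤ : Subgroup G) (i + 2) := rfl
      -- hence lcs K c = ⊥
      have hKbot : Subgroup.lowerCentralSeries (⊤ : Subgroup ↥K) c = ⊥ := by
        have h4 : (Subgroup.lowerCentralSeries (⊤ : Subgroup ↥K) c).map K.subtype ≤ ⊥ := by
          rw [← hbot]; exact hmap c hc1
        rwa [le_bot_iff, Subgroup.map_eq_bot_iff_of_injective _ K.subtype_injective] at h4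
      -- torsion-freeness of K
      have htfK : ∀ g : ↥K, ∀ m : ℕ, 1 ≤ m → g ^ m = 1 → g = 1 := by
        intro g m hm hg
        ext
        have : ((g : G)) ^ m = 1 := by
          rw [← Subgroup.coe_pow, hg, Subgroup.coe_one]
        simpa using htf _ m hm this
      -- apply IH in K to x and z = y⁻¹ * x * y
      have hxK : x ∈ K := Subgroup.mem_sup_left (Subgroup.mem_zpowers x)
      have hzK : y⁻¹ * x * y ∈ K := by
        have h5 : ⁅x⁻¹, y⁻¹⁆ ∈ Γ := by
          rw [hΓ, lowerCentralSeries_one]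
          exact Subgroup.commutator_mem_commutator (Subgroup.mem_top _) (Subgroup.mem_top _)
        have h6 : y⁻¹ * x * y = x * ⁅x⁻¹, y⁻¹⁆ := by
          simp [commutatorElement_def]; group
        rw [h6]
        exact K.mul_mem hxK (Subgroup.mem_sup_right h5)
      have hzn : (⟨y⁻¹ * x * y, hzK⟩ : ↥K) ^ n = (⟨x, hxK⟩ : ↥K) ^ n := by
        ext
        rw [Subgroup.coe_pow, Subgroup.coe_pow]
        show (y⁻¹ * x * y) ^ n = x ^ n
        rw [show y⁻¹ * x * y = y⁻¹ * x * (y⁻¹)⁻¹ by rw [inv_inv], conj_pow, inv_inv, hxy]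
        group
      have heq := ih hKbot htfK _ _ n hn hzn
      have hz : y⁻¹ * x * y = x := congrArg Subtype.val heq
      have hcomm : Commute x y := by
        have : x * y = y * x := by
          calc x * y = y * (y⁻¹ * x * y) := by group
            _ = y * x := by rw [hz]
        exact this
      exact aux_commute_eq htf hn hcomm hxy

/-- Every torsion-free nilpotent group is an R-group: if `G` is a nilpotent group in
which every nontrivial element has infinite order, then `g ^ n = h ^ n` with `n ≥ 1`
implies `g = h`. -/
theorem stmt7 {G : Type*} [Group G] [Group.IsNilpotent G]
    (htf : ∀ g : G, g ≠ 1 → ¬IsOfFinOrder g) :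
    ∀ (g h : G) (n : ℕ), 1 ≤ n → g ^ n = h ^ n → g = h := by
  obtain ⟨c, hc⟩ := nilpotent_iff_lowerCentralSeries.mp ‹Group.IsNilpotent G›
  have htf' : ∀ g : G, ∀ m : ℕ, 1 ≤ m → g ^ m = 1 → g = 1 := by
    intro g m hm hg
    by_contra hne
    exact htf g hne (isOfFinOrder_iff_pow_eq_one.mpr ⟨m, by omega, hg⟩)
  intro g h n hn hgh
  exact aux_key c hc htf' g h n hn hgh
end
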